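/- Let k ≥ 3. The graph obtained from Σ^{R}_{k,1} by deleting the vertex b_1 together with the edge between a_1 and b_{k+1} has diameter three, where a_1 is at distance three from c. -/

import Mathlib

/-- The graph `Σ^R_{k,n}` on vertices `a_1,…,a_k` (`Sum.inl`), `b_1,…,b_{k+n}`
(`Sum.inr ∘ Sum.inl`, 0-indexed) and `c` (`Sum.inr (Sum.inr ())`). -/
def sigmaR (k n : ℕ) : SimpleGraph (Fin k ⊕ Fin (k + n) ⊕ Unit) :=
  SimpleGraph.fromRel fun x y =>
    match x, y with
    | Sum.inl _, Sum.inl _ => True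
    | Sum.inr (Sum.inl _), Sum.inr (Sum.inl _) => True
    | Sum.inl i, Sum.inr (Sum.inl j) => (j : ℕ) = (i : ℕ) ∨ ((i : ℕ) < n ∧ (j : ℕ) = k + (i : ℕ))
    | Sum.inr (Sum.inr _), Sum.inr (Sum.inl _) => True
    | _, _ => False

/-!
The vertices `a_i` form one clique and the remaining `b_j` together with `c` form another,
and the two cliques are joined by the edge `a_2 b_2`; hence any two vertices are at distance
at most three. Once `b_1` and the edge `ε(a_1, b_{k+1})` are gone, all neighbours of `a_1` are
`a`'s, none of which is adjacent to `c`, so `a_1` and `c` are at distance more than two.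
-/

namespace SimpleGraph

variable {V : Type*} {G : SimpleGraph V} {s : Set V}

lemma IsClique.edist_le_one (hs : G.IsClique s) {x y : V} (hx : x ∈ s) (hy : y ∈ s) :
    G.edist x y ≤ 1 :=
  edist_le_one_iff_adj_or_eq.2 <| (eq_or_ne x y).symm.imp (hs hx hy) id

lemma edist_le_three_of_isClique_compl (hs : G.IsClique s) (hsc : G.IsClique sᶜ) {u v : V}
    (hu : u ∈ s) (hv : v ∉ s) (huv : G.Adj u v) {x y : V} (hx : x ∈ s) (hy : y ∉ s) :
    G.edist x y ≤ 3 :=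
  calc G.edist x y ≤ G.edist x u + G.edist u v + G.edist v y :=
        G.edist_triangle.trans (add_le_add_left G.edist_triangle _)
    _ ≤ 1 + 1 + 1 := by
        gcongr
        · exact hs.edist_le_one hx hu
        · exact (edist_eq_one_iff_adj.2 huv).le
        · exact hsc.edist_le_one hv hy
    _ = 3 := by norm_num

lemma ediam_le_three_of_isClique_compl (hs : G.IsClique s) (hsc : G.IsClique sᶜ) {u v : V}
    (hu : u ∈ s) (hv : v ∉ s) (huv : G.Adj u v) : G.ediam ≤ 3 := by
  refine ediam_le_of_edist_le fun x y => ?_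
  by_cases hx : x ∈ s <;> by_cases hy : y ∈ s
  · exact (hs.edist_le_one hx hy).trans (by norm_num)
  · exact edist_le_three_of_isClique_compl hs hsc hu hv huv hx hy
  · rw [edist_comm]
    exact edist_le_three_of_isClique_compl hs hsc hu hv huv hy hx
  · exact (hsc.edist_le_one hx hy).trans (by norm_num)

end SimpleGraph

def sigmaRCut (k : ℕ) (hk : 0 < k) :
    SimpleGraph {v : Fin k ⊕ Fin (k + 1) ⊕ Unit | v ≠ Sum.inr (Sum.inl 0)} :=
  ((sigmaR k 1).deleteEdges
      {s(Sum.inl ⟨0, hk⟩, Sum.inr (Sum.inl ⟨k, k.lt_succ_self⟩))}).induce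
    {v | v ≠ Sum.inr (Sum.inl 0)}

namespace sigmaRCut

lemma isClique_isLeft {k : ℕ} (hk : 0 < k) : (sigmaRCut k hk).IsClique {x | x.1.isLeft} := by
  rintro ⟨x | x | x, hx⟩ hx' ⟨y | y | y, hy⟩ hy' hxy <;> simp_all [sigmaRCut, sigmaR]

lemma isClique_compl_isLeft {k : ℕ} (hk : 0 < k) :
    (sigmaRCut k hk).IsClique {x | x.1.isLeft}ᶜ := by
  rintro ⟨x | x | x, hx⟩ hx' ⟨y | y | y, hy⟩ hy' hxy <;> simp_all [sigmaRCut, sigmaR]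

lemma adj_inl_inr {k : ℕ} (hk : 0 < k) {i : Fin k} (hi : (i : ℕ) ≠ 0) :
    (sigmaRCut k hk).Adj ⟨Sum.inl i, by simp⟩
      ⟨Sum.inr (Sum.inl i.castSucc), by simp [Fin.ext_iff, hi]⟩ := by
  simp [sigmaRCut, sigmaR, Fin.ext_iff, hi]

lemma ediam_le_three {k : ℕ} (hk : 1 < k) : (sigmaRCut k (zero_lt_one.trans hk)).ediam ≤ 3 :=
  SimpleGraph.ediam_le_three_of_isClique_compl (isClique_isLeft _) (isClique_compl_isLeft _)
    (u := ⟨Sum.inl ⟨1, hk⟩, by simp⟩) (by simp) (by simp) (adj_inl_inr _ one_ne_zero)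

lemma two_lt_edist {k : ℕ} (hk : 0 < k) :
    2 < (sigmaRCut k hk).edist ⟨Sum.inl ⟨0, hk⟩, by simp⟩
      ⟨Sum.inr (Sum.inr ()), by simp⟩ := by
  refine SimpleGraph.two_lt_edist_iff.2 ⟨by simp, by simp [sigmaRCut, sigmaR], ?_⟩
  ext ⟨w | w | w, hw⟩ <;> simp [SimpleGraph.mem_commonNeighbors, sigmaRCut, sigmaR]
  rintro (rfl | hw')
  · simp at hw
  · exact Fin.ext hw'

end sigmaRCut

/-- The graph obtained from `Σ^R_{k,1}` by deleting the vertex `b_1` together with the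
edge `ε(a_1, b_{k+1})` has diameter three, with `a_1` at distance three from `c`. -/
theorem stmt9 (k : ℕ) (hk : 3 ≤ k) :
    (((sigmaR k 1).deleteEdges
        {s(Sum.inl ⟨0, by omega⟩, Sum.inr (Sum.inl ⟨k, by omega⟩))}).induce
        {v | v ≠ Sum.inr (Sum.inl 0)}).diam = 3 ∧
    ∀ x y : ({v : Fin k ⊕ Fin (k + 1) ⊕ Unit | v ≠ Sum.inr (Sum.inl 0)} : Set _),
      (x : Fin k ⊕ Fin (k + 1) ⊕ Unit) = Sum.inl ⟨0, by omega⟩ →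
      (y : Fin k ⊕ Fin (k + 1) ⊕ Unit) = Sum.inr (Sum.inr ()) →
      (((sigmaR k 1).deleteEdges
          {s(Sum.inl ⟨0, by omega⟩, Sum.inr (Sum.inl ⟨k, by omega⟩))}).induce
          {v | v ≠ Sum.inr (Sum.inl 0)}).dist x y = 3 := by
  change (sigmaRCut k (by omega)).diam = 3 ∧
    ∀ x y, _ → _ → (sigmaRCut k (by omega)).dist x y = 3
  have hdiam := sigmaRCut.ediam_le_three (k := k) (by omega)
  have hdist : (sigmaRCut k (by omega)).edist ⟨Sum.inl ⟨0, by omega⟩, by simp⟩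
      ⟨Sum.inr (Sum.inr ()), by simp⟩ = 3 :=
    le_antisymm (SimpleGraph.edist_le_ediam.trans hdiam)
      (Order.add_one_le_of_lt (sigmaRCut.two_lt_edist _))
  refine ⟨?_, fun ⟨x, _⟩ ⟨y, _⟩ hx hy => ?_⟩
  · rw [SimpleGraph.diam, le_antisymm hdiam (hdist ▸ SimpleGraph.edist_le_ediam)]
    rfl
  · subst hx hy
    rw [SimpleGraph.dist, hdist]
    rfl
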